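/- arXiv:2602.05097 — 2 statements merged into one kernel-verified Lean document; each statement's English description precedes it below -/
import Mathlib

section
/- Let q be a power of a prime p, r ≥ 2, b ∈ F_{q^r}^* with b ≠ 1 and b^{(q^r−1)/(q−1)} = 1, and a ∈ F_{q^r} with a ≠ 0 and Tr_{q^r|q}(a) = 0. Let N = {(x, y) ∈ F_{q^r} × F_{q^r} : x^{(q^r−1)/(q−1)} = y^{q^{r−1}} + y^{q^{r−2}} + ⋯ + y^q + y} and let Ω = {(0, y) ∈ N}. Then the map σ(x, y) = (b x, y + a) is a bijection of N onto itself of order p · ord(b), where ord(b) is the multiplicative order of b; every point of Ω has σ-orbit of cardinality exactly p, so Ω splits into q^{r−1}/p such orbits; and every point of N with x ≠ 0 has σ-orbit of cardinality exactly p · ord(b). -/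
/-- The orbit of a point `P` under a bijection `f`, i.e. `{f^k(P) : k ∈ ℤ}`
(for an injective `f`, `Q` lies in the orbit of `P` iff some forward iterates agree). -/
def fnOrbit {α : Type*} (f : α → α) (P : α) : Set α :=
  {Q | ∃ j k : ℕ, f^[j] P = f^[k] Q}

/-- `f` has order exactly `n`: `f^[n] = id` and `n` is minimal positive such. -/
def IsOrderOf {α : Type*} (f : α → α) (n : ℕ) : Prop :=
  f^[n] = id ∧ ∀ k : ℕ, 0 < k → f^[k] = id → n ≤ k




lemma fnOrbit_eq_image {α : Type*} (f : α → α) (hf : Function.Injective f) (P : α)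
    (hP : P ∈ Function.periodicPts f) :
    fnOrbit f P = (fun k => f^[k] P) '' Set.Iio (Function.minimalPeriod f P) := by
  have hm : 0 < Function.minimalPeriod f P := Function.minimalPeriod_pos_of_mem_periodicPts hP
  ext Q
  constructor
  · rintro ⟨j, k, h⟩
    have key : ∃ t : ℕ, Q = f^[t] P := by
      rcases le_or_gt k j with hkj | hjk
      · refine ⟨j - k, ?_⟩
        have h1 := Function.iterate_add_apply f k (j - k) P
        rw [Nat.add_sub_cancel' hkj] at h1
        exact (hf.iterate k (h1.symm.trans h)).symm
      · have hper : f^[Function.minimalPeriod f P * k] P = P :=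
          (Function.isPeriodicPt_minimalPeriod f P).mul_const k
        have hk : k ≤ j + Function.minimalPeriod f P * k :=
          le_trans (Nat.le_mul_of_pos_left k hm) (Nat.le_add_left _ _)
        refine ⟨j + Function.minimalPeriod f P * k - k, ?_⟩
        have h2 : f^[j + Function.minimalPeriod f P * k] P = f^[k] Q := by
          rw [Function.iterate_add_apply, hper]; exact h
        have h1 := Function.iterate_add_apply f k (j + Function.minimalPeriod f P * k - k) P
        rw [Nat.add_sub_cancel' hk] at h1
        exact (hf.iterate k (h1.symm.trans h2)).symm
    obtain ⟨t, rfl⟩ := key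
    exact ⟨t % Function.minimalPeriod f P, Nat.mod_lt _ hm,
      Function.iterate_mod_minimalPeriod_eq⟩
  · rintro ⟨k, _, rfl⟩
    exact ⟨k, 0, rfl⟩

lemma fnOrbit_ncard {α : Type*} (f : α → α) (hf : Function.Injective f) (P : α)
    (hP : P ∈ Function.periodicPts f) :
    (fnOrbit f P).ncard = Function.minimalPeriod f P := by
  rw [fnOrbit_eq_image f hf P hP,
    Set.ncard_image_of_injOn Function.iterate_injOn_Iio_minimalPeriod,
    ← Finset.coe_range, Set.ncard_coe_finset, Finset.card_range]

lemma fnOrbit_self {α : Type*} (f : α → α) (P : α) : P ∈ fnOrbit f P := ⟨0, 0, rfl⟩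

lemma fnOrbit_trans {α : Type*} {f : α → α} {P Q R : α}
    (h1 : Q ∈ fnOrbit f P) (h2 : R ∈ fnOrbit f Q) : R ∈ fnOrbit f P := by
  obtain ⟨j, k, h1⟩ := h1
  obtain ⟨j', k', h2⟩ := h2
  refine ⟨j' + j, k + k', ?_⟩
  rw [Function.iterate_add_apply, h1, ← Function.iterate_add_apply,
    Nat.add_comm j' k, Function.iterate_add_apply, h2, ← Function.iterate_add_apply]

lemma fnOrbit_symm {α : Type*} {f : α → α} {P Q : α}
    (h : Q ∈ fnOrbit f P) : P ∈ fnOrbit f Q := by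
  obtain ⟨j, k, h⟩ := h; exact ⟨k, j, h.symm⟩

lemma fnOrbit_eq_of_mem {α : Type*} {f : α → α} {P Q : α}
    (h : Q ∈ fnOrbit f P) : fnOrbit f Q = fnOrbit f P := by
  ext R
  exact ⟨fun hR => fnOrbit_trans h hR, fun hR => fnOrbit_trans (fnOrbit_symm h) hR⟩



open Polynomial in
lemma ncard_le_natDegree {F : Type*} [Field F] [Fintype F] (φ : Polynomial F) (hφ : φ ≠ 0)
    (s : Set F) (hs : ∀ x ∈ s, φ.IsRoot x) : s.ncard ≤ φ.natDegree := by
  classical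
  have hsub : s ⊆ ↑φ.roots.toFinset := by
    intro x hx
    simp only [Finset.coe_sort_coe, Multiset.mem_toFinset, Finset.mem_coe]
    exact Polynomial.mem_roots'.mpr ⟨hφ, hs x hx⟩
  calc s.ncard ≤ (↑φ.roots.toFinset : Set F).ncard :=
        Set.ncard_le_ncard hsub (Set.toFinite _)
    _ = φ.roots.toFinset.card := Set.ncard_coe_finset _
    _ ≤ Multiset.card φ.roots := Multiset.toFinset_card_le _
    _ ≤ φ.natDegree := Polynomial.card_roots' φ

lemma ker_trace_ncard (p nn q r : ℕ) (hp : p.Prime) (hq : q = p ^ nn) (hn : 1 ≤ nn) (hr : 1 ≤ r)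
    {F : Type*} [Field F] [Fintype F] [CharP F p] (hF : Fintype.card F = q ^ r) :
    Set.ncard {y : F | ∑ i ∈ Finset.range r, y ^ q ^ i = 0} = q ^ (r - 1) := by
  classical
  haveI : Fact p.Prime := ⟨hp⟩
  have hq2 : 2 ≤ q := le_trans hp.two_le (hq ▸ Nat.le_self_pow (by omega) p)
  have hqi : ∀ i, q ^ i = p ^ (nn * i) := fun i => by rw [hq, ← pow_mul]
  set tr : F →+ F := AddMonoidHom.mk' (fun y => ∑ i ∈ Finset.range r, y ^ q ^ i)
    (by
      intro x y
      rw [← Finset.sum_add_distrib]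
      refine Finset.sum_congr rfl fun i _ => ?_
      rw [hqi i]
      exact add_pow_char_pow x y p (nn*i)) with htr
  -- kernel bound
  have hker_le : Set.ncard {y : F | ∑ i ∈ Finset.range r, y ^ q ^ i = 0} ≤ q ^ (r - 1) := by
    set φ : Polynomial F := ∑ i ∈ Finset.range r, Polynomial.X ^ q ^ i with hφdef
    have hc : φ.coeff (q ^ (r - 1)) = 1 := by
      rw [hφdef, Polynomial.finset_sum_coeff,
        Finset.sum_eq_single_of_mem (r - 1) (Finset.mem_range.mpr (by omega))]
      · rw [Polynomial.coeff_X_pow, if_pos rfl]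
      · intro i _ hne
        rw [Polynomial.coeff_X_pow, if_neg]
        intro hEq
        exact hne (Nat.pow_right_injective hq2 hEq).symm
    have hφ0 : φ ≠ 0 := by
      intro h; rw [h, Polynomial.coeff_zero] at hc; exact one_ne_zero hc.symm
    have hdeg : φ.natDegree ≤ q ^ (r - 1) := by
      refine Polynomial.natDegree_sum_le_of_forall_le _ _ fun i hi => ?_
      rw [Polynomial.natDegree_X_pow]
      exact Nat.pow_le_pow_right (by omega) (by have := Finset.mem_range.mp hi; omega)
    refine le_trans (ncard_le_natDegree φ hφ0 _ fun y hy => ?_) hdeg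
    simp only [Set.mem_setOf_eq] at hy
    simp [hφdef, Polynomial.IsRoot, Polynomial.eval_finset_sum, hy]
  -- range bound
  have hrange_le : Set.ncard (Set.range tr) ≤ q := by
    set ψ : Polynomial F := Polynomial.X ^ q - Polynomial.X with hψdef
    have hc : ψ.coeff q = 1 := by
      rw [hψdef, Polynomial.coeff_sub, Polynomial.coeff_X_pow, if_pos rfl,
        Polynomial.coeff_X, if_neg (by omega), sub_zero]
    have hψ0 : ψ ≠ 0 := by
      intro h; rw [h, Polynomial.coeff_zero] at hc; exact one_ne_zero hc.symm
    have hdeg : ψ.natDegree ≤ q := by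
      refine le_trans (Polynomial.natDegree_sub_le _ _) ?_
      simp only [Polynomial.natDegree_X_pow, Polynomial.natDegree_X]
      omega
    refine le_trans (ncard_le_natDegree ψ hψ0 _ fun z hz => ?_) hdeg
    obtain ⟨y, rfl⟩ := hz
    have hfix : (tr y) ^ q = tr y := by
      have h1 : (tr y) ^ q = ∑ i ∈ Finset.range r, y ^ q ^ (i + 1) := by
        have hpow : ∀ z : F, z ^ q = z ^ p ^ nn := fun z => by rw [hq]
        rw [htr]
        simp only [AddMonoidHom.mk'_apply]
        rw [hpow, sum_pow_char_pow]
        refine Finset.sum_congr rfl fun i _ => ?_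
        rw [← hpow, ← pow_mul, ← pow_succ]
      have h2 : ∑ i ∈ Finset.range r, y ^ q ^ (i + 1) = ∑ i ∈ Finset.range r, y ^ q ^ i := by
        have hs := Finset.sum_range_succ' (fun i => y ^ q ^ i) r
        have hs2 := Finset.sum_range_succ (fun i => y ^ q ^ i) r
        have hy0 : y ^ q ^ r = y ^ q ^ 0 := by
          rw [pow_zero, pow_one, ← hF, FiniteField.pow_card]
        rw [hs2, hy0] at hs
        have := hs.symm
        exact add_right_cancel this
      rw [h1, h2, htr]
      simp only [AddMonoidHom.mk'_apply]
    simp [hψdef, Polynomial.IsRoot, sub_eq_zero, hfix]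
  -- first isomorphism theorem
  have hcardF : Nat.card F = Nat.card (F ⧸ tr.ker) * Nat.card tr.ker :=
    AddSubgroup.card_eq_card_quotient_mul_card_addSubgroup tr.ker
  have hquot : Nat.card (F ⧸ tr.ker) = Nat.card tr.range :=
    Nat.card_congr (QuotientAddGroup.quotientKerEquivRange tr).toEquiv
  have hrange_card : Nat.card tr.range = (Set.range tr).ncard := by
    rw [← Nat.card_coe_set_eq]
    exact Nat.card_congr (Equiv.setCongr (AddMonoidHom.coe_range tr))
  have hker_card : Nat.card tr.ker = Set.ncard {y : F | ∑ i ∈ Finset.range r, y ^ q ^ i = 0} := by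
    rw [← Nat.card_coe_set_eq]
    refine Nat.card_congr (Equiv.setCongr ?_)
    ext y
    simp [AddMonoidHom.mem_ker, htr]
  -- arithmetic
  have hq0 : 0 < q := by omega
  have hprod : Set.ncard {y : F | ∑ i ∈ Finset.range r, y ^ q ^ i = 0} * (Set.range tr).ncard
      = q ^ r := by
    rw [← hker_card, ← hrange_card, Nat.mul_comm, ← hquot, ← hcardF, Nat.card_eq_fintype_card, hF]
  have hqr : q ^ r = q ^ (r - 1) * q := by
    rw [← pow_succ]
    congr 1
    omega
  set k := Set.ncard {y : F | ∑ i ∈ Finset.range r, y ^ q ^ i = 0}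
  have h5 : k * q ≥ q ^ (r - 1) * q := by
    calc q ^ (r - 1) * q = k * (Set.range tr).ncard := by rw [← hqr, ← hprod]
      _ ≤ k * q := Nat.mul_le_mul_left k hrange_le
  have h6 : k * q ≤ q ^ (r - 1) * q := Nat.mul_le_mul_right q hker_le
  exact Nat.eq_of_mul_eq_mul_right hq0 (le_antisymm h6 h5)

theorem stmt13 (p nn q r : ℕ) (hp : p.Prime) (hq : q = p ^ nn) (hn : 1 ≤ nn) (hr : 2 ≤ r)
    {F : Type*} [Field F] [Fintype F] (hF : Fintype.card F = q ^ r)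
    (b : F) (hb0 : b ≠ 0) (hb1 : b ≠ 1)
    (hbnorm : b ^ (∑ i ∈ Finset.range r, q ^ i) = 1)
    (a : F) (ha : a ≠ 0) (hTr : ∑ i ∈ Finset.range r, a ^ q ^ i = 0)
    (N : Set (F × F)) (hN : N = {P : F × F | P.1 ^ (∑ i ∈ Finset.range r, q ^ i)
      = ∑ i ∈ Finset.range r, P.2 ^ q ^ i})
    (Ω : Set (F × F)) (hΩ : Ω = {P : F × F | P ∈ N ∧ P.1 = 0})
    (σ : F × F → F × F) (hσ : σ = fun P => (b * P.1, P.2 + a)) :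
    Set.BijOn σ N N ∧
    IsOrderOf σ (p * orderOf b) ∧
    (∀ P ∈ Ω, (fnOrbit σ P).ncard = p) ∧
    {O : Set (F × F) | ∃ P ∈ Ω, O = fnOrbit σ P}.ncard = q ^ (r - 1) / p ∧
    ∀ P ∈ N, P.1 ≠ 0 → (fnOrbit σ P).ncard = p * orderOf b := by
  classical
  haveI : Fact p.Prime := ⟨hp⟩
  haveI hchar : CharP F p := by
    have h1 : (ringChar F).Prime := CharP.char_is_prime F (ringChar F)
    obtain ⟨n, _, hcard⟩ := FiniteField.card F (ringChar F)
    have h2 : q ^ r = ringChar F ^ (n : ℕ) := hF ▸ hcard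
    have hq2 : p ∣ ringChar F ^ (n : ℕ) := by
      rw [← h2, hq, ← pow_mul]
      exact dvd_pow_self p (by positivity)
    have h3 : p = ringChar F := (Nat.prime_dvd_prime_iff_eq hp h1).mp (hp.dvd_of_dvd_pow hq2)
    rw [h3]; exact ringChar.charP F
  have hq2 : 2 ≤ q := le_trans hp.two_le (hq ▸ Nat.le_self_pow (by omega) p)
  have hqi : ∀ i, q ^ i = p ^ (nn * i) := fun i => by rw [hq, ← pow_mul]
  have hfrob : ∀ (x y : F) (i : ℕ), (x + y) ^ q ^ i = x ^ q ^ i + y ^ q ^ i := fun x y i => by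
    rw [hqi i]; exact add_pow_char_pow x y p (nn * i)
  have htradd : ∀ x y : F, ∑ i ∈ Finset.range r, (x + y) ^ q ^ i
      = (∑ i ∈ Finset.range r, x ^ q ^ i) + ∑ i ∈ Finset.range r, y ^ q ^ i := by
    intro x y
    rw [← Finset.sum_add_distrib]
    exact Finset.sum_congr rfl fun i _ => hfrob x y i
  have htr0 : ∑ i ∈ Finset.range r, (0 : F) ^ q ^ i = 0 :=
    Finset.sum_eq_zero fun i _ => zero_pow (by positivity)
  have htrneg : ∑ i ∈ Finset.range r, (-a) ^ q ^ i = 0 := by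
    have h := htradd a (-a)
    rw [add_neg_cancel, htr0, hTr, zero_add] at h
    exact h.symm
  have hM0 : (∑ i ∈ Finset.range r, q ^ i) ≠ 0 := by
    have : 0 < ∑ i ∈ Finset.range r, q ^ i :=
      Finset.sum_pos (fun i _ => pow_pos (by omega) i) (Finset.nonempty_range_iff.mpr (by omega))
    omega
  have hiter : ∀ (k : ℕ) (P : F × F), σ^[k] P = (b ^ k * P.1, P.2 + (k : F) * a) := by
    intro k
    induction k with
    | zero => intro P; simp
    | succ k ih =>
      intro P
      rw [Function.iterate_succ_apply', ih P, hσ]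
      simp only [Prod.mk.injEq]
      constructor
      · rw [pow_succ]; ring
      · push_cast; ring
  have hinj : Function.Injective σ := by
    intro P Q h
    rw [hσ] at h
    simp only [Prod.mk.injEq] at h
    exact Prod.ext (mul_left_cancel₀ hb0 h.1) (add_right_cancel h.2)
  have hMmod : ¬ p ∣ (∑ i ∈ Finset.range r, q ^ i) := by
    intro hdvd
    have h1 : ((∑ i ∈ Finset.range r, q ^ i : ℕ) : ZMod p) = 0 :=
      (ZMod.natCast_eq_zero_iff _ p).mpr hdvd
    have hq0 : ((q : ℕ) : ZMod p) = 0 := by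
      rw [hq]; push_cast; rw [ZMod.natCast_self]; exact zero_pow (by omega)
    rw [Nat.cast_sum] at h1
    have h2 : ∑ i ∈ Finset.range r, ((q ^ i : ℕ) : ZMod p) = 1 := by
      have : ∀ i ∈ Finset.range r, ((q ^ i : ℕ) : ZMod p) = if i = 0 then 1 else 0 := by
        intro i _
        push_cast
        rw [hq0]
        rcases Nat.eq_zero_or_pos i with h | h
        · simp [h]
        · rw [if_neg (by omega)]; exact zero_pow (by omega)
      rw [Finset.sum_congr rfl this, Finset.sum_ite_eq' (Finset.range r) 0 (fun _ => 1),
        if_pos (Finset.mem_range.mpr (by omega))]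
    rw [h1] at h2
    exact one_ne_zero h2.symm
  have hordM : orderOf b ∣ (∑ i ∈ Finset.range r, q ^ i) := orderOf_dvd_of_pow_eq_one hbnorm
  have hord0 : 0 < orderOf b := by
    rcases Nat.eq_zero_or_pos (orderOf b) with h | h
    · rw [h] at hordM; exact absurd (Nat.eq_zero_of_zero_dvd hordM) hM0
    · exact h
  have hcop : Nat.Coprime p (orderOf b) :=
    (Nat.Prime.coprime_iff_not_dvd hp).mpr fun hdvd => hMmod (hdvd.trans hordM)
  have hcast : ∀ k : ℕ, ((k : F) = 0 ↔ p ∣ k) := fun k => CharP.cast_eq_zero_iff F p k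
  have hσn : σ^[p * orderOf b] = id := by
    funext P
    rw [hiter]
    have hb : b ^ (p * orderOf b) = 1 := by
      rw [mul_comm, pow_mul, pow_orderOf_eq_one, one_pow]
    have hc : ((p * orderOf b : ℕ) : F) = 0 := (hcast _).mpr ⟨orderOf b, rfl⟩
    rw [hb, hc, one_mul, zero_mul, add_zero, id_eq]
  -- Part 1: BijOn
  have hmaps : Set.MapsTo σ N N := by
    intro P hP
    rw [hN, Set.mem_setOf_eq] at hP ⊢
    rw [hσ]
    simp only
    rw [mul_pow, hbnorm, one_mul, htradd, hTr, add_zero]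
    exact hP
  have hsurj : Set.SurjOn σ N N := by
    intro P hP
    rw [hN, Set.mem_setOf_eq] at hP
    refine ⟨(b⁻¹ * P.1, P.2 - a), ?_, ?_⟩
    · rw [hN, Set.mem_setOf_eq]
      simp only
      rw [mul_pow, inv_pow, hbnorm, inv_one, one_mul, sub_eq_add_neg, htradd, htrneg, add_zero]
      exact hP
    · rw [hσ]
      simp only
      rw [← mul_assoc, mul_inv_cancel₀ hb0, one_mul, sub_add_cancel]
  have hbij : Set.BijOn σ N N := ⟨hmaps, hinj.injOn, hsurj⟩
  -- Part 2 : IsOrderOf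
  have hord : (σ^[p * orderOf b] = id) ∧ ∀ k : ℕ, 0 < k → σ^[k] = id → p * orderOf b ≤ k := by
    refine ⟨hσn, fun k hk0 hkid => ?_⟩
    have h1 := congrFun hkid ((1 : F), (0 : F))
    rw [hiter, id_eq, Prod.mk.injEq] at h1
    obtain ⟨h1, h2⟩ := h1
    rw [mul_one] at h1
    rw [zero_add] at h2
    have hok : orderOf b ∣ k := orderOf_dvd_of_pow_eq_one h1
    have hpk : p ∣ k := by
      rcases mul_eq_zero.mp h2 with h | h
      · exact (hcast k).mp h
      · exact absurd h ha
    exact Nat.le_of_dvd hk0 (hcop.mul_dvd_of_dvd_of_dvd hpk hok)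
  -- Part 3: orbits in Omega
  have hpart3 : ∀ P ∈ Ω, (fnOrbit σ P).ncard = p := by
    intro P hP
    rw [hΩ, Set.mem_setOf_eq] at hP
    obtain ⟨hPN, hP1⟩ := hP
    have hperP : Function.IsPeriodicPt σ p P := by
      show σ^[p] P = P
      rw [hiter, hP1, mul_zero, CharP.cast_eq_zero F p, zero_mul, add_zero, ← hP1]
    have hmemper : P ∈ Function.periodicPts σ := ⟨p, hp.pos, hperP⟩
    have hm1 : Function.minimalPeriod σ P ≠ 1 := by
      intro h
      have := Function.isPeriodicPt_minimalPeriod σ P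
      rw [h] at this
      have h2 : σ P = P := this
      rw [hσ] at h2
      have := congrArg Prod.snd h2
      simp only at this
      apply ha
      have h3 : P.2 + a = P.2 + 0 := by rw [add_zero]; exact this
      exact add_left_cancel h3
    have hmp : Function.minimalPeriod σ P = p := by
      rcases (Nat.Prime.eq_one_or_self_of_dvd hp _ hperP.minimalPeriod_dvd) with h | h
      · exact absurd h hm1
      · exact h
    rw [fnOrbit_ncard σ hinj P hmemper, hmp]
  -- Part 5: orbits off the line x = 0
  have hpart5 : ∀ P ∈ N, P.1 ≠ 0 → (fnOrbit σ P).ncard = p * orderOf b := by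
    intro P _ hx
    have hnpos : 0 < p * orderOf b := Nat.mul_pos hp.pos hord0
    have hperP : Function.IsPeriodicPt σ (p * orderOf b) P := by
      show σ^[p * orderOf b] P = P
      rw [hσn, id_eq]
    have hmemper : P ∈ Function.periodicPts σ := ⟨p * orderOf b, hnpos, hperP⟩
    have hmin := Function.isPeriodicPt_minimalPeriod σ P
    have hminpos : 0 < Function.minimalPeriod σ P :=
      Function.minimalPeriod_pos_of_mem_periodicPts hmemper
    have h2 : σ^[Function.minimalPeriod σ P] P = P := hmin
    rw [hiter, Prod.ext_iff] at h2
    simp only at h2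
    obtain ⟨h3, h4⟩ := h2
    have hb1' : b ^ Function.minimalPeriod σ P = 1 := by
      have : b ^ Function.minimalPeriod σ P * P.1 = 1 * P.1 := by rw [one_mul]; exact h3
      exact mul_right_cancel₀ hx this
    have hok : orderOf b ∣ Function.minimalPeriod σ P := orderOf_dvd_of_pow_eq_one hb1'
    have hpk : p ∣ Function.minimalPeriod σ P := by
      have h5 : ((Function.minimalPeriod σ P : ℕ) : F) * a = 0 := by
        have : P.2 + ((Function.minimalPeriod σ P : ℕ) : F) * a = P.2 + 0 := by
          rw [add_zero]; exact h4
        exact add_left_cancel this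
      rcases mul_eq_zero.mp h5 with h | h
      · exact (hcast _).mp h
      · exact absurd h ha
    have hdvd1 : p * orderOf b ∣ Function.minimalPeriod σ P :=
      hcop.mul_dvd_of_dvd_of_dvd hpk hok
    have heq : Function.minimalPeriod σ P = p * orderOf b :=
      Nat.dvd_antisymm hperP.minimalPeriod_dvd hdvd1
    rw [fnOrbit_ncard σ hinj P hmemper, heq]
  -- Omega cardinality
  have hΩcard : Ω.ncard = q ^ (r - 1) := by
    have himg : Ω = (fun y => ((0 : F), y)) '' {y : F | ∑ i ∈ Finset.range r, y ^ q ^ i = 0} := by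
      ext P
      rw [hΩ, Set.mem_setOf_eq, hN, Set.mem_setOf_eq]
      constructor
      · rintro ⟨hPN, hP1⟩
        refine ⟨P.2, ?_, ?_⟩
        · rw [Set.mem_setOf_eq, ← hPN, hP1, zero_pow hM0]
        · exact Prod.ext hP1.symm rfl
      · rintro ⟨y, hy, rfl⟩
        rw [Set.mem_setOf_eq] at hy
        exact ⟨by simp only; rw [zero_pow hM0, hy], rfl⟩
    rw [himg, Set.ncard_image_of_injective _ (fun y z h => congrArg Prod.snd h)]
    exact ker_trace_ncard p nn q r hp hq hn (by omega) hF
  -- orbits of Omega points stay in Omega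
  have htrka : ∀ k : ℕ, ∑ i ∈ Finset.range r, ((k : F) * a) ^ q ^ i = 0 := by
    intro k
    induction k with
    | zero => rw [Nat.cast_zero, zero_mul]; exact htr0
    | succ k ih =>
      have : ((k + 1 : ℕ) : F) * a = (k : F) * a + a := by push_cast; ring
      rw [this, htradd, ih, hTr, add_zero]
  have hOrbSub : ∀ P ∈ Ω, fnOrbit σ P ⊆ Ω := by
    intro P hP Q hQ
    rw [hΩ, Set.mem_setOf_eq] at hP
    obtain ⟨hPN, hP1⟩ := hP
    have hperP : Function.IsPeriodicPt σ p P := by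
      show σ^[p] P = P
      rw [hiter, hP1, mul_zero, CharP.cast_eq_zero F p, zero_mul, add_zero, ← hP1]
    rw [fnOrbit_eq_image σ hinj P ⟨p, hp.pos, hperP⟩] at hQ
    obtain ⟨k, _, rfl⟩ := hQ
    show σ^[k] P ∈ Ω
    rw [hiter, hΩ, Set.mem_setOf_eq]
    constructor
    · rw [hN, Set.mem_setOf_eq]
      simp only
      rw [hP1, mul_zero, zero_pow hM0, htradd, htrka, add_zero]
      rw [hN, Set.mem_setOf_eq, hP1, zero_pow hM0] at hPN
      exact hPN
    · simp only
      rw [hP1, mul_zero]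
  -- Part 4: number of orbits
  have hpart4 : {O : Set (F × F) | ∃ P ∈ Ω, O = fnOrbit σ P}.ncard = q ^ (r - 1) / p := by
    have hΩfin : Ω.Finite := Set.toFinite Ω
    set ΩF := hΩfin.toFinset with hΩF
    set t := ΩF.image (fun P => fnOrbit σ P) with ht
    have hSeq : {O : Set (F × F) | ∃ P ∈ Ω, O = fnOrbit σ P} = ↑t := by
      ext O
      simp only [Set.mem_setOf_eq, ht, hΩF, Finset.coe_image, Set.mem_image, Finset.mem_coe,
        Set.Finite.mem_toFinset]
      constructor
      · rintro ⟨P, hP, rfl⟩; exact ⟨P, hP, rfl⟩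
      · rintro ⟨P, hP, rfl⟩; exact ⟨P, hP, rfl⟩
    have hcount : ΩF.card = t.card * p := by
      rw [Finset.card_eq_sum_card_fiberwise
        (f := fun P => fnOrbit σ P) (t := t) (fun P hP => Finset.mem_image_of_mem _ hP)]
      rw [Finset.sum_congr rfl (fun O hO => ?_), Finset.sum_const, smul_eq_mul]
      obtain ⟨P₀, hP₀, rfl⟩ := Finset.mem_image.mp hO
      have hP₀Ω : P₀ ∈ Ω := (Set.Finite.mem_toFinset _).mp hP₀
      have hfib : ΩF.filter (fun Q => fnOrbit σ Q = fnOrbit σ P₀)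
          = (Set.toFinite (fnOrbit σ P₀)).toFinset := by
        ext Q
        simp only [Finset.mem_filter, Set.Finite.mem_toFinset]
        constructor
        · rintro ⟨_, hQeq⟩
          rw [← hQeq]
          exact fnOrbit_self σ Q
        · intro hQ
          exact ⟨(Set.Finite.mem_toFinset _).mpr (hOrbSub P₀ hP₀Ω hQ), fnOrbit_eq_of_mem hQ⟩
      rw [hfib, ← Set.ncard_eq_toFinset_card _ (Set.toFinite (fnOrbit σ P₀))]
      exact hpart3 P₀ hP₀Ω
    have hΩFcard : ΩF.card = q ^ (r - 1) := by
      rw [← hΩcard, Set.ncard_eq_toFinset_card _ hΩfin]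
    rw [hSeq, Set.ncard_coe_finset]
    have : q ^ (r - 1) = t.card * p := by rw [← hΩFcard, hcount]
    exact (Nat.div_eq_of_eq_mul_left hp.pos this).symm
  exact ⟨hbij, ⟨hord.1, hord.2⟩, hpart3, hpart4, hpart5⟩
end

section
/- Let q be a power of a prime p and m > 1 an integer with gcd(m, q) = 1 and m dividing q + 1, and let ζ ∈ F_{q^2} be a primitive m-th root of unity. Let S = {(x, y) ∈ F_{q^2} × F_{q^2} : y^q − y = x^m} and let Ω = {(0, y) : y ∈ F_q} ⊆ S. Then the map η(x, y) = (ζ x, y + 1) is a bijection of S onto itself of order pm; every point of Ω has η-orbit of cardinality exactly p, so Ω splits into q/p such orbits; and every point of S with x ≠ 0 has η-orbit of cardinality exactly pm. -/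
open Function Set

section Orbits

variable {α : Type*} {f : α → α} {x y : α}

lemma mem_fnOrbit_self (f : α → α) (x : α) : x ∈ fnOrbit f x := ⟨0, 0, rfl⟩

lemma mem_fnOrbit_comm : y ∈ fnOrbit f x ↔ x ∈ fnOrbit f y :=
  ⟨fun ⟨j, k, h⟩ => ⟨k, j, h.symm⟩, fun ⟨j, k, h⟩ => ⟨k, j, h.symm⟩⟩

lemma fnOrbit_subset_of_mem (h : y ∈ fnOrbit f x) : fnOrbit f y ⊆ fnOrbit f x := by
  obtain ⟨j, k, hjk⟩ := h
  rintro z ⟨a, b, hab⟩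
  refine ⟨a + j, k + b, ?_⟩
  rw [iterate_add_apply, hjk, ← iterate_add_apply, add_comm, iterate_add_apply, hab,
    ← iterate_add_apply]

lemma fnOrbit_eq_of_mem_s19 (h : y ∈ fnOrbit f x) : fnOrbit f y = fnOrbit f x :=
  (fnOrbit_subset_of_mem h).antisymm (fnOrbit_subset_of_mem (mem_fnOrbit_comm.1 h))

lemma fnOrbit_eq_range_iterate (hf : Injective f) (hx : x ∈ periodicPts f) :
    fnOrbit f x = range (f^[·] x) := by
  ext y
  constructor
  · rintro ⟨j, k, hjk⟩
    refine ⟨j + k * (minimalPeriod f x - 1), (hf.iterate k) ?_⟩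
    obtain ⟨P, hP⟩ :=
      Nat.exists_eq_add_one_of_ne_zero (minimalPeriod_pos_of_mem_periodicPts hx).ne'
    have hk : k + (j + k * (minimalPeriod f x - 1)) = j + minimalPeriod f x * k := by
      rw [hP, Nat.add_sub_cancel]; ring
    rw [← hjk, ← iterate_add_apply, hk, iterate_add_apply,
      ((isPeriodicPt_minimalPeriod f x).mul_const k).eq]
  · rintro ⟨n, rfl⟩
    exact ⟨n, 0, rfl⟩

lemma ncard_range_iterate (hx : x ∈ periodicPts f) :
    (range (f^[·] x)).ncard = minimalPeriod f x := by
  have h : range (f^[·] x) = (f^[·] x) '' ↑(Finset.range (minimalPeriod f x)) := by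
    refine (range_subset_iff.2 fun n => ?_).antisymm (image_subset_range _ _)
    refine ⟨n % minimalPeriod f x, ?_, iterate_mod_minimalPeriod_eq⟩
    simpa using Nat.mod_lt n (minimalPeriod_pos_of_mem_periodicPts hx)
  rw [h, InjOn.ncard_image (by simpa using iterate_injOn_Iio_minimalPeriod), ncard_coe_finset,
    Finset.card_range]

lemma ncard_fnOrbit (hf : Injective f) (hx : x ∈ periodicPts f) :
    (fnOrbit f x).ncard = minimalPeriod f x := by
  rw [fnOrbit_eq_range_iterate hf hx, ncard_range_iterate hx]

lemma fnOrbit_subset_of_mapsTo {s : Set α} (hf : Injective f) (hx : x ∈ periodicPts f)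
    (hs : MapsTo f s s) (hxs : x ∈ s) : fnOrbit f x ⊆ s := by
  rw [fnOrbit_eq_range_iterate hf hx]
  exact range_subset_iff.2 fun n => hs.iterate n hxs

lemma ncard_fnOrbits_mul {s : Set α} {d : ℕ} (hs : s.Finite)
    (hsub : ∀ x ∈ s, fnOrbit f x ⊆ s) (hcard : ∀ x ∈ s, (fnOrbit f x).ncard = d) :
    {O | ∃ x ∈ s, O = fnOrbit f x}.ncard * d = s.ncard := by
  classical
  have hO : {O | ∃ x ∈ s, O = fnOrbit f x} = fnOrbit f '' s := by
    ext O; simp [eq_comm]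
  have hOfin : (fnOrbit f '' s).Finite := hs.image _
  have hfiber : ∀ O ∈ hOfin.toFinset, {y ∈ hs.toFinset | fnOrbit f y = O}.card = d := by
    intro O hO
    obtain ⟨x, hx, rfl⟩ := hOfin.mem_toFinset.1 hO
    rw [← hcard x hx, ← ncard_coe_finset]
    congr 1
    ext y
    simp only [Finset.coe_filter, hs.mem_toFinset, mem_ofPred_eq]
    exact ⟨fun ⟨_, hy⟩ => hy ▸ mem_fnOrbit_self f y,
      fun hy => ⟨hsub x hx hy, fnOrbit_eq_of_mem_s19 hy⟩⟩
  rw [hO, ncard_eq_toFinset_card _ hOfin, ncard_eq_toFinset_card _ hs,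
    Finset.card_eq_sum_card_fiberwise (f := fnOrbit f) (t := hOfin.toFinset)
      (fun y hy => by simpa using mem_image_of_mem _ (hs.mem_toFinset.1 hy)),
    Finset.sum_const_nat hfiber]

lemma minimalPeriod_eq_of_iterate_eq_self_iff {d : ℕ} (h : ∀ n, f^[n] x = x ↔ d ∣ n) :
    minimalPeriod f x = d :=
  Nat.dvd_right_iff_eq.1 fun n => isPeriodicPt_iff_minimalPeriod_dvd.symm.trans (h n)

lemma isOrderOf_of_minimalPeriod_eq {n : ℕ} (hper : ∀ y, IsPeriodicPt f n y)
    (hx : minimalPeriod f x = n) : IsOrderOf f n := by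
  refine ⟨funext hper, fun k hk hkid => ?_⟩
  rw [← hx]
  exact IsPeriodicPt.minimalPeriod_le hk (congrFun hkid x)

end Orbits

lemma minimalPeriod_mul_left_of_ne_zero {M₀ : Type*} [MonoidWithZero M₀]
    [IsRightCancelMulZero M₀] (a : M₀) {x : M₀} (hx : x ≠ 0) :
    minimalPeriod (a * ·) x = orderOf a :=
  minimalPeriod_eq_of_iterate_eq_self_iff fun n => by
    rw [mul_left_iterate_apply, mul_eq_right₀ hx, orderOf_dvd_iff_pow_eq_one]

lemma minimalPeriod_add_one (R : Type*) [AddGroupWithOne R] (p : ℕ) [CharP R p] (y : R) :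
    minimalPeriod (· + 1) y = p :=
  minimalPeriod_eq_of_iterate_eq_self_iff fun n => by
    rw [add_right_iterate_apply, add_eq_left, nsmul_one, CharP.cast_eq_zero_iff R p]

/-- The nonzero solutions are the `(n - 1)`-th roots of unity, and the cyclic group `Kˣ` has a
primitive one since `n - 1` divides its order. -/
lemma ncard_setOf_pow_eq_self {K : Type*} [Field K] [Fintype K] {n : ℕ}
    (hn : n - 1 ∣ Fintype.card K - 1) : {y : K | y ^ n = y}.ncard = n := by
  classical
  have hn1 : 0 < n - 1 := by
    refine Nat.pos_of_ne_zero fun h => ?_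
    rw [h, zero_dvd_iff] at hn
    have := Fintype.one_lt_card (α := K)
    omega
  obtain ⟨u, hu⟩ : ∃ u : Kˣ, orderOf u = n - 1 := by
    have h := IsCyclic.card_orderOf_eq_totient (α := Kˣ) (d := n - 1)
      (by rwa [Fintype.card_units])
    obtain ⟨u, hu⟩ := Finset.card_pos.1 (h ▸ Nat.totient_pos.2 hn1)
    exact ⟨u, (Finset.mem_filter.1 hu).2⟩
  have hprim : IsPrimitiveRoot (u : K) (n - 1) :=
    IsPrimitiveRoot.coe_units_iff.2 (hu ▸ IsPrimitiveRoot.orderOf u)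
  have hsucc : n - 1 + 1 = n := by omega
  have hset : {y : K | y ^ n = y} =
      insert 0 (Polynomial.nthRootsFinset (n - 1) (1 : K) : Set K) := by
    ext y
    rcases eq_or_ne y 0 with rfl | hy
    · simp [zero_pow (by omega : n ≠ 0)]
    · rw [mem_ofPred_eq, mem_insert_iff, Finset.mem_coe, Polynomial.mem_nthRootsFinset hn1,
        ← mul_eq_right₀ hy, ← pow_succ, hsucc]
      simp [hy]
  have hzero : (0 : K) ∉ (Polynomial.nthRootsFinset (n - 1) (1 : K) : Set K) := by
    simp [Polynomial.mem_nthRootsFinset hn1, zero_pow hn1.ne']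
  rw [hset, ncard_insert_of_notMem hzero, ncard_coe_finset, hprim.card_nthRootsFinset, hsucc]

section ScaleTranslate

variable {R : Type*} [Ring R]

lemma minimalPeriod_prodMap_mul_add_one_zero (p : ℕ) [CharP R p] (a y : R) :
    minimalPeriod (Prod.map (a * ·) (· + 1)) (0, y) = p := by
  rw [minimalPeriod_prodMap, minimalPeriod_add_one R p,
    minimalPeriod_eq_one_iff_isFixedPt.2 (mul_zero a), Nat.lcm_one_left]

lemma minimalPeriod_prodMap_mul_add_one_of_ne_zero [IsDomain R] {p : ℕ} [CharP R p] {a : R}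
    (hpa : p.Coprime (orderOf a)) {P : R × R} (hP : P.1 ≠ 0) :
    minimalPeriod (Prod.map (a * ·) (· + 1)) P = p * orderOf a := by
  rw [minimalPeriod_prodMap, minimalPeriod_add_one R p, minimalPeriod_mul_left_of_ne_zero a hP,
    Nat.lcm_comm, hpa.lcm_eq_mul]

lemma isPeriodicPt_prodMap_mul_add_one (p : ℕ) [CharP R p] (a : R) (P : R × R) :
    IsPeriodicPt (Prod.map (a * ·) (· + 1)) (p * orderOf a) P := by
  refine (isPeriodicPt_prodMap P).2 ⟨?_, ?_⟩
  · show (a * ·)^[p * orderOf a] P.1 = P.1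
    rw [mul_left_iterate_apply, pow_mul', pow_orderOf_eq_one, one_pow, one_mul]
  · rw [isPeriodicPt_iff_minimalPeriod_dvd, minimalPeriod_add_one R p]
    exact dvd_mul_right p _

end ScaleTranslate

lemma axis_subset_curve {R : Type*} [CommRing R] {q m : ℕ} (hm : m ≠ 0) :
    {P : R × R | P.1 = 0 ∧ P.2 ^ q = P.2} ⊆ {P | P.2 ^ q - P.2 = P.1 ^ m} := by
  rintro ⟨x, y⟩ ⟨rfl, hy⟩
  show y ^ q - y = 0 ^ m
  rw [hy, sub_self, zero_pow hm]

section ArtinSchreierCurve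

variable {R : Type*} [CommRing R] {p : ℕ} [Fact p.Prime] [CharP R p]

lemma mapsTo_prodMap_mul_add_one_curve (n : ℕ) {m : ℕ} {a : R} (ha : a ^ m = 1) :
    MapsTo (Prod.map (a * ·) (· + 1)) {P : R × R | P.2 ^ p ^ n - P.2 = P.1 ^ m}
      {P | P.2 ^ p ^ n - P.2 = P.1 ^ m} := by
  rintro ⟨x, y⟩ (h : y ^ p ^ n - y = x ^ m)
  show (y + 1) ^ p ^ n - (y + 1) = (a * x) ^ m
  rw [add_pow_char_pow, one_pow, mul_pow, ha, one_mul, ← h]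
  ring

lemma mapsTo_prodMap_mul_add_one_axis (n : ℕ) (a : R) :
    MapsTo (Prod.map (a * ·) (· + 1)) {P : R × R | P.1 = 0 ∧ P.2 ^ p ^ n = P.2}
      {P | P.1 = 0 ∧ P.2 ^ p ^ n = P.2} := by
  rintro ⟨x, y⟩ ⟨rfl, hy⟩
  exact ⟨mul_zero a, by simp [add_pow_char_pow, hy]⟩

end ArtinSchreierCurve

lemma ncard_setOf_fst_eq_zero_and_pow_eq_self {K : Type*} [Field K] [Fintype K] {n : ℕ}
    (hn : n - 1 ∣ Fintype.card K - 1) : {P : K × K | P.1 = 0 ∧ P.2 ^ n = P.2}.ncard = n := by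
  have h : {P : K × K | P.1 = 0 ∧ P.2 ^ n = P.2} = Prod.mk 0 '' {y | y ^ n = y} := by
    ext ⟨x, y⟩
    simp [eq_comm, and_comm]
  rw [h, ncard_image_of_injective _ (Prod.mk_right_injective 0), ncard_setOf_pow_eq_self hn]

theorem stmt19_general (p nn q m : ℕ) (hp : p.Prime) (hq : q = p ^ nn)
    (hm : 1 < m) (hgcd : Nat.gcd m q = 1)
    {F : Type*} [Field F] [Fintype F] (hF : Fintype.card F = q ^ 2)
    (ζ : F) (hζ : orderOf ζ = m)
    (S : Set (F × F)) (hS : S = {P : F × F | P.2 ^ q - P.2 = P.1 ^ m})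
    (Ω : Set (F × F)) (hΩ : Ω = {P : F × F | P.1 = 0 ∧ P.2 ^ q = P.2})
    (η : F × F → F × F) (hη : η = fun P => (ζ * P.1, P.2 + 1)) :
    Ω ⊆ S ∧
    Set.BijOn η S S ∧
    IsOrderOf η (p * m) ∧
    (∀ P ∈ Ω, (fnOrbit η P).ncard = p) ∧
    {O : Set (F × F) | ∃ P ∈ Ω, O = fnOrbit η P}.ncard = q / p ∧
    ∀ P ∈ S, P.1 ≠ 0 → (fnOrbit η P).ncard = p * m := by
  replace hη : η = Prod.map (ζ * ·) (· + 1) := hη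
  have : Fact p.Prime := ⟨hp⟩
  have : CharP F p := charP_of_card_eq_prime_pow (hF.trans (by rw [hq, ← pow_mul]))
  have hnn : nn ≠ 0 := by
    rintro rfl
    simp [hq, Fintype.one_lt_card.ne'] at hF
  have hpζ : p.Coprime (orderOf ζ) :=
    hζ ▸ (Nat.Coprime.coprime_dvd_right (hq ▸ dvd_pow_self p hnn) hgcd).symm
  have hζ0 : ζ ≠ 0 := by
    rintro rfl
    simp [eq_comm] at hζ
    omega
  have hinj : Injective η := hη ▸ (mul_right_injective₀ hζ0).prodMap (add_left_injective 1)
  have hperiodic (P : F × F) : IsPeriodicPt η (p * m) P :=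
    hη ▸ hζ ▸ isPeriodicPt_prodMap_mul_add_one p ζ P
  have hmem (P : F × F) : P ∈ periodicPts η :=
    mk_mem_periodicPts (Nat.mul_pos hp.pos (by omega)) (hperiodic P)
  have hperiod_ne (P : F × F) (hP : P.1 ≠ 0) : minimalPeriod η P = p * m := by
    rw [hη, minimalPeriod_prodMap_mul_add_one_of_ne_zero hpζ hP, hζ]
  have hΩorbit : ∀ P ∈ Ω, (fnOrbit η P).ncard = p := by
    rw [hΩ]
    rintro ⟨x, y⟩ ⟨rfl, -⟩
    rw [ncard_fnOrbit hinj (hmem _), hη, minimalPeriod_prodMap_mul_add_one_zero]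
  have hΩcard : Ω.ncard = q :=
    hΩ ▸ ncard_setOf_fst_eq_zero_and_pow_eq_self (hF ▸ Nat.sub_one_dvd_pow_sub_one q 2)
  subst hq
  have hmapsS : MapsTo η S S :=
    hS ▸ hη ▸ mapsTo_prodMap_mul_add_one_curve nn (hζ ▸ pow_orderOf_eq_one ζ)
  have hmapsΩ : MapsTo η Ω Ω := hΩ ▸ hη ▸ mapsTo_prodMap_mul_add_one_axis nn ζ
  refine ⟨hΩ ▸ hS ▸ axis_subset_curve (by omega),
    ((toFinite S).injOn_iff_bijOn_of_mapsTo hmapsS).1 hinj.injOn,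
    isOrderOf_of_minimalPeriod_eq hperiodic (hperiod_ne (1, 0) one_ne_zero), hΩorbit, ?_, ?_⟩
  · refine (Nat.div_eq_of_eq_mul_left hp.pos ?_).symm
    rw [ncard_fnOrbits_mul (toFinite Ω)
      (fun P hP => fnOrbit_subset_of_mapsTo hinj (hmem P) hmapsΩ hP) hΩorbit, hΩcard]
  · intro P _ hP
    rw [ncard_fnOrbit hinj (hmem P), hperiod_ne P hP]

theorem stmt19 (p nn q m : ℕ) (hp : p.Prime) (hq : q = p ^ nn) (hn : 1 ≤ nn)
    (hm : 1 < m) (hgcd : Nat.gcd m q = 1) (hdvd : m ∣ (q + 1))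
    {F : Type*} [Field F] [Fintype F] (hF : Fintype.card F = q ^ 2)
    (ζ : F) (hζ : orderOf ζ = m)
    (S : Set (F × F)) (hS : S = {P : F × F | P.2 ^ q - P.2 = P.1 ^ m})
    (Ω : Set (F × F)) (hΩ : Ω = {P : F × F | P.1 = 0 ∧ P.2 ^ q = P.2})
    (η : F × F → F × F) (hη : η = fun P => (ζ * P.1, P.2 + 1)) :
    Ω ⊆ S ∧
    Set.BijOn η S S ∧
    IsOrderOf η (p * m) ∧
    (∀ P ∈ Ω, (fnOrbit η P).ncard = p) ∧
    {O : Set (F × F) | ∃ P ∈ Ω, O = fnOrbit η P}.ncard = q / p ∧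
    ∀ P ∈ S, P.1 ≠ 0 → (fnOrbit η P).ncard = p * m :=
  stmt19_general p nn q m hp hq hm hgcd hF ζ hζ S hS Ω hΩ η hη
end
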